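/- arXiv:2307.16065 — 3 statements merged into one kernel-verified Lean document; each statement's English description precedes it below -/
import Mathlib

section
/- Let a > 0, C > 0, and let g : ℝ → ℂ be a measurable function such that g(λ) = 0 for all λ < 0 and |g(λ)| ≤ C·e^{−aλ} for all λ ≥ 0. If ∫_ℝ λ^m · g(λ) dλ = 0 for every natural number m, then g = 0 almost everywhere on ℝ. -/
/-!
The Laplace transform `L g z = ∫ e^{zx} g(x) dx` converges on the half-plane `Re z < a`, and around
each point `z₀` of it expands as a power series in `z - z₀` whose coefficients are the moments of
`e^{z₀x} g(x)` divided by `n!`. So `L g` is holomorphic on the half-plane and, all moments of `g`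
vanishing, identically zero near `0`, hence on the whole half-plane. On the imaginary axis `L g` is
the Fourier transform of `g`, and an integrable function with vanishing Fourier transform is zero
almost everywhere.
-/

open MeasureTheory Complex Real FourierTransform
open scoped Nat NNReal

/-- The two-sided Laplace transform, with the kernel `e^{zx}` of moment generating functions
rather than `e^{-zx}`. -/
noncomputable def laplaceTransform (g : ℝ → ℂ) (z : ℂ) : ℂ := ∫ x : ℝ, cexp (z * x) * g x

theorem exp_mul_le_mul_exp_sub {a b C x y : ℝ} (h : y ≤ C * rexp (-a * x)) :
    rexp (b * x) * y ≤ C * rexp (-(a - b) * x) :=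
  calc rexp (b * x) * y ≤ rexp (b * x) * (C * rexp (-a * x)) := by gcongr
    _ = C * rexp (-(a - b) * x) := by rw [mul_left_comm, ← Real.exp_add]; ring_nf

section LaplaceTransform

variable {g : ℝ → ℂ}

theorem hasSum_laplaceTransform {y : ℂ} (hg_meas : AEStronglyMeasurable g)
    (hg : Integrable fun x => rexp (‖y‖ * |x|) * ‖g x‖) :
    HasSum (fun n => (∫ x : ℝ, (x : ℂ) ^ n * g x) / n ! * y ^ n) (laplaceTransform g y) := by
  set bound : ℕ → ℝ → ℝ := fun n x => (‖y‖ * |x|) ^ n / n ! * ‖g x‖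
  have norm_eq_bound n x : ‖(y * x) ^ n / n ! * g x‖ = bound n x := by
    simp [bound, mul_pow]
  have bound_hasSum x : HasSum (bound · x) (rexp (‖y‖ * |x|) * ‖g x‖) := by
    simpa [← Real.exp_eq_exp_ℝ] using
      (NormedSpace.expSeries_div_hasSum_exp (‖y‖ * |x|)).mul_right ‖g x‖
  have integral_eq n :
      ∫ x : ℝ, (y * x) ^ n / n ! * g x = (∫ x : ℝ, (x : ℂ) ^ n * g x) / n ! * y ^ n := by
    rw [← integral_div, ← integral_mul_const]
    congr with x
    ring
  simp only [← integral_eq]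
  refine hasSum_integral_of_dominated_convergence bound (fun n => by fun_prop)
    (fun n => .of_forall fun x => (norm_eq_bound n x).le)
    (.of_forall fun x => ⟨_, bound_hasSum x⟩)
    (hg.congr (.of_forall fun x => (bound_hasSum x).tsum_eq.symm)) (.of_forall fun x => ?_)
  simpa [← Complex.exp_eq_exp_ℂ] using
    (NormedSpace.expSeries_div_hasSum_exp (y * x)).mul_right (g x)

theorem hasFPowerSeriesOnBall_laplaceTransform {r : ℝ≥0} (hr : 0 < r)
    (hg_meas : AEStronglyMeasurable g) (hg : Integrable fun x => rexp (r * |x|) * ‖g x‖) :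
    HasFPowerSeriesOnBall (laplaceTransform g)
      (.ofScalars ℂ fun n => (∫ x : ℝ, (x : ℂ) ^ n * g x) / n !) 0 r := by
  have hsum {y : ℂ} (hy : ‖y‖ ≤ r) := hasSum_laplaceTransform hg_meas (hg.mono' (by fun_prop)
    (.of_forall fun x => by
      rw [Real.norm_of_nonneg (by positivity)]
      gcongr))
  refine ⟨FormalMultilinearSeries.le_radius_of_tendsto _ (l := 0) ?_, by exact_mod_cast hr,
    fun {y} hy => ?_⟩
  · simpa [FormalMultilinearSeries.ofScalars_norm] using
      (hsum (y := r) (by simp)).summable.tendsto_atTop_zero.norm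
  · rw [Metric.mem_eball, edist_zero_right, enorm_eq_nnnorm, ENNReal.coe_lt_coe] at hy
    simpa [FormalMultilinearSeries.ofScalars_apply_eq, mul_comm] using hsum hy.le

theorem laplaceTransform_add_eq_laplaceTransform_cexp_mul (z w : ℂ) :
    laplaceTransform g (z + w) = laplaceTransform (fun x => cexp (z * x) * g x) w := by
  simp only [laplaceTransform, add_mul, Complex.exp_add]
  congr with x
  ring

theorem integrable_exp_mul_abs_mul_norm {a b C : ℝ} (hg_meas : AEStronglyMeasurable g)
    (hg_supp : ∀ x : ℝ, x < 0 → g x = 0) (hg_bound : ∀ x : ℝ, 0 ≤ x → ‖g x‖ ≤ C * rexp (-a * x))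
    (hb : b < a) :
    Integrable fun x => rexp (b * |x|) * ‖g x‖ := by
  have hdom : Integrable ((Set.Ici 0).indicator fun x => C * rexp (-(a - b) * x)) := by
    rw [integrable_indicator_iff measurableSet_Ici, integrableOn_Ici_iff_integrableOn_Ioi]
    exact (exp_neg_integrableOn_Ioi 0 (sub_pos.2 hb)).const_mul C
  refine hdom.mono' (by fun_prop) (.of_forall fun x => ?_)
  rw [Real.norm_of_nonneg (by positivity)]
  rcases lt_or_ge x 0 with hx | hx
  · simp [hg_supp x hx, Set.indicator_of_notMem (Set.notMem_Ici.2 hx)]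
  · rw [Set.indicator_of_mem (Set.mem_Ici.2 hx), abs_of_nonneg hx]
    exact exp_mul_le_mul_exp_sub (hg_bound x hx)

theorem analyticOnNhd_laplaceTransform {a C : ℝ} (hg_meas : AEStronglyMeasurable g)
    (hg_supp : ∀ x : ℝ, x < 0 → g x = 0) (hg_bound : ∀ x : ℝ, 0 ≤ x → ‖g x‖ ≤ C * rexp (-a * x)) :
    AnalyticOnNhd ℂ (laplaceTransform g) {z | z.re < a} := by
  intro z (hz : z.re < a)
  set gz : ℝ → ℂ := fun x => cexp (z * x) * g x
  have hgz_bound (x : ℝ) (hx : 0 ≤ x) : ‖gz x‖ ≤ C * rexp (-(a - z.re) * x) := by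
    simpa [gz, Complex.norm_exp] using exp_mul_le_mul_exp_sub (b := z.re) (hg_bound x hx)
  set r := ((a - z.re) / 2).toNNReal
  have hr : (r : ℝ) = (a - z.re) / 2 := Real.coe_toNNReal _ (by linarith)
  have hgz := hasFPowerSeriesOnBall_laplaceTransform (g := gz) (r := r) (by simpa [r] using hz)
    (by fun_prop) (integrable_exp_mul_abs_mul_norm (by fun_prop)
      (by simp +contextual [gz, hg_supp]) hgz_bound (by linarith))
  have hshift : (fun w => laplaceTransform gz (w - z)) = laplaceTransform g := by
    ext w
    rw [← laplaceTransform_add_eq_laplaceTransform_cexp_mul, add_sub_cancel]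
  simpa [hshift] using (hgz.comp_sub z).analyticAt

theorem laplaceTransform_eqOn_zero_of_moments_eq_zero {a C : ℝ} (ha : 0 < a)
    (hg_meas : AEStronglyMeasurable g) (hg_supp : ∀ x : ℝ, x < 0 → g x = 0)
    (hg_bound : ∀ x : ℝ, 0 ≤ x → ‖g x‖ ≤ C * rexp (-a * x))
    (hmom : ∀ n : ℕ, ∫ x : ℝ, (x : ℂ) ^ n * g x = 0) :
    Set.EqOn (laplaceTransform g) 0 {z | z.re < a} := by
  refine (analyticOnNhd_laplaceTransform hg_meas hg_supp hg_bound
    ).eqOn_zero_of_preconnected_of_eventuallyEq_zero (convex_halfSpace_re_lt a).isPreconnected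
    (z₀ := 0) (by simpa using ha) ?_
  have hseries := hasFPowerSeriesOnBall_laplaceTransform (r := (a / 2).toNNReal)
    (by simpa using ha) hg_meas
    (integrable_exp_mul_abs_mul_norm hg_meas hg_supp hg_bound (by simp [ha]))
  have hcoeff : (fun n : ℕ => (∫ x : ℝ, (x : ℂ) ^ n * g x) / n !) = 0 := by
    ext n
    simp [hmom]
  rw [hcoeff, FormalMultilinearSeries.ofScalars_series_eq_zero_of_scalar_zero] at hseries
  exact hseries.eventually_eq_zero

theorem fourier_eq_laplaceTransform (ξ : ℝ) : 𝓕 g ξ = laplaceTransform g (-2 * π * ξ * I) := by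
  rw [fourier_real_eq_integral_exp_smul]
  congr with x
  push_cast
  ring_nf

end LaplaceTransform

theorem ae_eq_zero_of_fourier_eq_zero {V E : Type*} [NormedAddCommGroup V]
    [InnerProductSpace ℝ V] [FiniteDimensional ℝ V] [MeasurableSpace V] [BorelSpace V]
    [NormedAddCommGroup E] [NormedSpace ℂ E] [CompleteSpace E]
    {f : V → E} (hf : Integrable f) (h : 𝓕 f = 0) : f =ᵐ[volume] 0 := by
  refine ae_eq_zero_of_integral_contDiff_smul_eq_zero hf.locallyIntegrable fun u hu hu_supp => ?_
  -- `u` is the Fourier transform of the Schwartz function `𝓕⁻ u`, and `𝓕` is self-adjoint.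
  let ψ : SchwartzMap V ℂ :=
    (hu_supp.comp_left (g := ofRealCLM) rfl).toSchwartzMap (ofRealCLM.contDiff.comp hu)
  calc ∫ x, u x • f x = ∫ x, 𝓕 (𝓕⁻ ψ) x • f x := by
        simp [FourierTransform.fourier_fourierInv_eq, ψ]
    _ = ∫ x, 𝓕⁻ ψ x • 𝓕 f x := by
        rw [SchwartzMap.fourier_coe]
        have hswap := VectorFourier.integral_fourierIntegral_smul_eq_flip (L := innerₗ V)
          Real.continuous_fourierChar continuous_inner ((𝓕⁻ ψ).integrable (μ := volume)) hf
        rwa [flip_innerₗ] at hswap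
    _ = 0 := by simp [h]

theorem eq_zero_ae_of_moments_vanish_general
    (a C : ℝ) (ha : 0 < a) (g : ℝ → ℂ)
    (hg_meas : Measurable g)
    (hg_supp : ∀ l : ℝ, l < 0 → g l = 0)
    (hg_bound : ∀ l : ℝ, 0 ≤ l → ‖g l‖ ≤ C * Real.exp (-a * l))
    (hmom : ∀ m : ℕ, ∫ l : ℝ, (l : ℂ) ^ m * g l = 0) :
    g =ᵐ[volume] 0 := by
  have hL := laplaceTransform_eqOn_zero_of_moments_eq_zero ha hg_meas.aestronglyMeasurable
    hg_supp hg_bound hmom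
  have hg_int : Integrable g := by
    refine (integrable_norm_iff hg_meas.aestronglyMeasurable).1 ?_
    simpa using integrable_exp_mul_abs_mul_norm hg_meas.aestronglyMeasurable hg_supp hg_bound ha
  refine ae_eq_zero_of_fourier_eq_zero hg_int (funext fun ξ => ?_)
  rw [fourier_eq_laplaceTransform]
  exact hL (by simp [ha])

/-- Moment uniqueness: if all moments of an exponentially decaying measurable function
supported on `[0,∞)` vanish, then the function vanishes almost everywhere. -/
theorem eq_zero_ae_of_moments_vanish
    (a C : ℝ) (ha : 0 < a) (hC : 0 < C) (g : ℝ → ℂ)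
    (hg_meas : Measurable g)
    (hg_supp : ∀ l : ℝ, l < 0 → g l = 0)
    (hg_bound : ∀ l : ℝ, 0 ≤ l → ‖g l‖ ≤ C * Real.exp (-a * l))
    (hmom : ∀ m : ℕ, ∫ l : ℝ, (l : ℂ) ^ m * g l = 0) :
    g =ᵐ[volume] 0 :=
  eq_zero_ae_of_moments_vanish_general a C ha g hg_meas hg_supp hg_bound hmom
end

section
/- Let 0 < s < 1, b > 0, C > 0, and let G : (0,∞) → ℝ be a continuous function satisfying |G(t)| ≤ C·t^{−3/2}·e^{−b/t} for all t > 0. If ∫_0^∞ G(t)·t^{−(m+s)} dt = 0 for every integer m ≥ 1, then G(t) = 0 for all t > 0. -/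
/-!
Substituting `t = 1/x` turns the hypotheses into the statement that
`W x = x ^ (s - 1) * G x⁻¹` decays like `x ^ (s + 1/2) * exp (-b x)` on `(0, ∞)` and has all
moments `∫ x ^ n * W x` equal to zero. Splitting `W` into positive and negative parts gives two
finite measures with the same moments whose moment generating functions are finite near `0`.
Their complex moment generating functions are then analytic on a vertical strip and have the same
Taylor series at `0`, so they agree on the imaginary axis: the two measures have the same
characteristic function, hence coincide, and `W = 0`.
-/

open MeasureTheory ProbabilityTheory Filter Topology Set
open scoped ENNReal

theorem AnalyticAt.eventuallyEq_of_iteratedDeriv_eq {𝕜 E : Type*} [NontriviallyNormedField 𝕜]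
    [CharZero 𝕜] [NormedAddCommGroup E] [NormedSpace 𝕜 E] [CompleteSpace E] {f g : 𝕜 → E}
    {z : 𝕜} (hf : AnalyticAt 𝕜 f z) (hg : AnalyticAt 𝕜 g z)
    (h : ∀ n, iteratedDeriv n f z = iteratedDeriv n g z) : f =ᶠ[𝓝 z] g := by
  have h_top : analyticOrderAt (f - g) z = ⊤ :=
    ENat.eq_top_iff_forall_ge.2 fun n ↦
      (natCast_le_analyticOrderAt_iff_iteratedDeriv_eq_zero (hf.sub hg)).2 fun i _ ↦ by
        rw [iteratedDeriv_sub hf.contDiffAt hg.contDiffAt, h i, sub_self]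
  filter_upwards [analyticOrderAt_eq_top.1 h_top] with w hw using sub_eq_zero.1 hw

theorem MeasureTheory.Measure.ext_of_integral_pow_eq {μ ν : Measure ℝ} [IsFiniteMeasure μ]
    [IsFiniteMeasure ν] (hμ : 0 ∈ interior (integrableExpSet id μ))
    (hν : 0 ∈ interior (integrableExpSet id ν))
    (h : ∀ n : ℕ, ∫ x, x ^ n ∂μ = ∫ x, x ^ n ∂ν) : μ = ν := by
  set S : Set ℂ :=
    {z | z.re ∈ interior (integrableExpSet id μ) ∩ interior (integrableExpSet id ν)}
  have hS : IsPreconnected S :=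
    ((convex_integrableExpSet.interior.inter convex_integrableExpSet.interior).linear_preimage
      Complex.reLm).isPreconnected
  have h0S : (0 : ℂ) ∈ S := ⟨hμ, hν⟩
  have h_near : complexMGF id μ =ᶠ[𝓝 0] complexMGF id ν := by
    refine (analyticAt_complexMGF (by simpa using hμ)).eventuallyEq_of_iteratedDeriv_eq
      (analyticAt_complexMGF (by simpa using hν)) fun n ↦ ?_
    rw [iteratedDeriv_complexMGF (by simpa using hμ),
      iteratedDeriv_complexMGF (by simpa using hν)]
    simpa [← Complex.ofReal_pow, integral_complex_ofReal] using
      congrArg ((↑) : ℝ → ℂ) (h n)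
  have h_eqOn : EqOn (complexMGF id μ) (complexMGF id ν) S :=
    (analyticOnNhd_complexMGF.mono fun _ hz ↦ hz.1).eqOn_of_preconnected_of_eventuallyEq
      (analyticOnNhd_complexMGF.mono fun _ hz ↦ hz.2) hS h0S h_near
  refine Measure.ext_of_charFun (funext fun t ↦ ?_)
  rw [← complexMGF_id_mul_I, ← complexMGF_id_mul_I]
  exact h_eqOn (by simpa [S] using h0S)

lemma subset_integrableExpSet_withDensity_toNNReal {ρ : Measure ℝ} {f g : ℝ → ℝ}
    (hg : AEMeasurable g ρ) (hgf : ∀ x, |g x| ≤ |f x|) :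
    {t | Integrable (fun x ↦ Real.exp (t * x) * f x) ρ} ⊆
      integrableExpSet id (ρ.withDensity fun x ↦ (g x).toNNReal) := fun t ht ↦ by
  rw [integrableExpSet, mem_ofPred_eq,
    integrable_withDensity_iff_integrable_smul₀ hg.real_toNNReal]
  refine ht.mono (hg.real_toNNReal.coe_nnreal_real.aestronglyMeasurable.smul
    (by fun_prop : Continuous fun x ↦ Real.exp (t * id x)).aestronglyMeasurable)
    (ae_of_all _ fun x ↦ ?_)
  simp only [NNReal.smul_def, smul_eq_mul, norm_mul, Real.norm_eq_abs, Real.coe_toNNReal', id,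
    abs_of_nonneg (le_max_right (g x) 0), mul_comm |Real.exp _|]
  gcongr
  exact (max_le (le_abs_self _) (abs_nonneg _)).trans (hgf x)

theorem ae_eq_zero_of_integral_pow_mul_eq_zero {ρ : Measure ℝ} {f : ℝ → ℝ}
    (hf : 0 ∈ interior {t | Integrable (fun x ↦ Real.exp (t * x) * f x) ρ})
    (hmom : ∀ n : ℕ, ∫ x, x ^ n * f x ∂ρ = 0) : f =ᵐ[ρ] 0 := by
  have hf_meas : AEMeasurable f ρ := by
    simpa using (interior_subset hf).aemeasurable
  have hf_neg : AEMeasurable (fun x ↦ -f x) ρ := hf_meas.neg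
  set μ := ρ.withDensity fun x ↦ (f x).toNNReal
  set ν := ρ.withDensity fun x ↦ (-f x).toNNReal
  have hμ : 0 ∈ interior (integrableExpSet id μ) :=
    interior_mono (subset_integrableExpSet_withDensity_toNNReal hf_meas fun _ ↦ le_rfl) hf
  have hν : 0 ∈ interior (integrableExpSet id ν) :=
    interior_mono (subset_integrableExpSet_withDensity_toNNReal hf_neg fun x ↦ (abs_neg _).le) hf
  have : IsFiniteMeasure μ := (integrable_const_iff_isFiniteMeasure one_ne_zero).1 <| by
    simpa using integrable_pow_of_mem_interior_integrableExpSet hμ 0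
  have : IsFiniteMeasure ν := (integrable_const_iff_isFiniteMeasure one_ne_zero).1 <| by
    simpa using integrable_pow_of_mem_interior_integrableExpSet hν 0
  have hμν : μ = ν := Measure.ext_of_integral_pow_eq hμ hν fun n ↦ by
    have hμn := integrable_pow_of_mem_interior_integrableExpSet hμ n
    have hνn := integrable_pow_of_mem_interior_integrableExpSet hν n
    rw [integrable_withDensity_iff_integrable_smul₀ hf_meas.real_toNNReal] at hμn
    rw [integrable_withDensity_iff_integrable_smul₀ hf_neg.real_toNNReal] at hνn
    simp only [id] at hμn hνn
    rw [integral_withDensity_eq_integral_smul₀ hf_meas.real_toNNReal,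
      integral_withDensity_eq_integral_smul₀ hf_neg.real_toNNReal, ← sub_eq_zero,
      ← integral_sub hμn hνn, ← hmom n]
    congr with x
    simp only [NNReal.smul_def, smul_eq_mul, Real.coe_toNNReal']
    rw [← sub_mul, max_zero_sub_max_neg_zero_eq_self, mul_comm]
  have h_lintegral : ∫⁻ x, (f x).toNNReal ∂ρ ≠ ∞ := by
    simpa [μ] using measure_ne_top μ univ
  filter_upwards [(withDensity_eq_iff hf_meas.real_toNNReal.coe_nnreal_ennreal
    hf_neg.real_toNNReal.coe_nnreal_ennreal h_lintegral).1 hμν] with x hx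
  rw [← max_zero_sub_max_neg_zero_eq_self (f x), ← Real.coe_toNNReal', ← Real.coe_toNNReal',
    ENNReal.coe_inj.1 hx, sub_self, Pi.zero_apply]

theorem integral_pow_mul_rpow_mul_comp_inv (g : ℝ → ℝ) (a : ℝ) (n : ℕ) :
    ∫ x in Ioi 0, x ^ n * (x ^ a * g x⁻¹) = ∫ t in Ioi 0, g t * t ^ (-(n + a + 2)) := by
  rw [← integral_comp_rpow_Ioi (fun t ↦ g t * t ^ (-(n + a + 2))) (neg_ne_zero.2 one_ne_zero)]
  refine setIntegral_congr_fun measurableSet_Ioi fun x (hx : 0 < x) ↦ ?_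
  have h_pow : x ^ (-1 - 1 : ℝ) * x ^ (n + a + 2) = x ^ n * x ^ a := by
    rw [← Real.rpow_natCast, ← Real.rpow_add hx, ← Real.rpow_add hx]
    ring_nf
  simp only [smul_eq_mul, Real.rpow_neg_one, abs_neg, abs_one, one_mul, Real.inv_rpow hx.le,
    ← Real.rpow_neg hx.le, neg_neg]
  linear_combination -g x⁻¹ * h_pow

lemma abs_rpow_mul_comp_inv_le {G : ℝ → ℝ} {C b q : ℝ}
    (hG : ∀ t : ℝ, 0 < t → |G t| ≤ C * t ^ (-q) * Real.exp (-b / t)) (a : ℝ) {x : ℝ}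
    (hx : 0 < x) : |x ^ a * G x⁻¹| ≤ C * x ^ (a + q) * Real.exp (-b * x) := by
  have hG_inv := hG x⁻¹ (inv_pos.2 hx)
  rw [Real.inv_rpow hx.le, ← Real.rpow_neg hx.le, neg_neg, div_inv_eq_mul] at hG_inv
  calc |x ^ a * G x⁻¹| = x ^ a * |G x⁻¹| := by
        rw [abs_mul, abs_of_pos (Real.rpow_pos_of_pos hx _)]
    _ ≤ x ^ a * (C * x ^ q * Real.exp (-b * x)) := by gcongr
    _ = C * x ^ (a + q) * Real.exp (-b * x) := by rw [Real.rpow_add hx]; ring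

lemma integrableOn_exp_mul_mul_of_abs_le_rpow_mul_exp {f : ℝ → ℝ} {C p b t : ℝ}
    (hp : -1 < p) (ht : t < b) (hf : AEStronglyMeasurable f (volume.restrict (Ioi 0)))
    (hbound : ∀ x > 0, |f x| ≤ C * x ^ p * Real.exp (-b * x)) :
    IntegrableOn (fun x ↦ Real.exp (t * x) * f x) (Ioi 0) := by
  have hdom : IntegrableOn (fun x ↦ C * (x ^ p * Real.exp (-(b - t) * x ^ (1 : ℝ)))) (Ioi 0) :=
    (integrableOn_rpow_mul_exp_neg_mul_rpow hp one_pos (sub_pos.2 ht)).const_mul C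
  refine hdom.mono'
    ((by fun_prop : Continuous fun x ↦ Real.exp (t * x)).aestronglyMeasurable.mul hf)
    ((ae_restrict_iff' measurableSet_Ioi).2 (ae_of_all _ fun x (hx : 0 < x) ↦ ?_))
  calc ‖Real.exp (t * x) * f x‖ = Real.exp (t * x) * |f x| := by
        rw [norm_mul, Real.norm_of_nonneg (Real.exp_pos _).le, Real.norm_eq_abs]
    _ ≤ Real.exp (t * x) * (C * x ^ p * Real.exp (-b * x)) := by gcongr; exact hbound x hx
    _ = C * (x ^ p * Real.exp (-(b - t) * x ^ (1 : ℝ))) := by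
        rw [Real.rpow_one, show -(b - t) * x = t * x + -b * x by ring, Real.exp_add]; ring

theorem vanish_of_weighted_moments_vanish_general
    (s b C : ℝ) (hs0 : 0 < s) (hb : 0 < b)
    (G : ℝ → ℝ) (hG_cont : ContinuousOn G (Set.Ioi 0))
    (hG_bound : ∀ t : ℝ, 0 < t → |G t| ≤ C * t ^ (-(3 / 2) : ℝ) * Real.exp (-b / t))
    (hmom : ∀ m : ℕ, 1 ≤ m → ∫ t in Set.Ioi (0 : ℝ), G t * t ^ (-((m : ℝ) + s)) = 0) :
    ∀ t : ℝ, 0 < t → G t = 0 := by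
  set W : ℝ → ℝ := fun x ↦ x ^ (s - 1) * G x⁻¹
  have hW_cont : ContinuousOn W (Ioi 0) :=
    (continuousOn_id.rpow_const fun x hx ↦ Or.inl (ne_of_gt hx)).mul <|
      hG_cont.comp (continuousOn_inv₀.mono fun _ hx ↦ ne_of_gt hx) fun _ hx ↦
        mem_Ioi.2 (inv_pos.2 hx)
  have hW_mom : ∀ n : ℕ, ∫ x in Ioi 0, x ^ n * W x = 0 := fun n ↦ by
    rw [integral_pow_mul_rpow_mul_comp_inv]
    convert hmom (n + 1) n.succ_pos using 5
    push_cast; ring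
  have hW_exp : 0 ∈ interior {t | Integrable (fun x ↦ Real.exp (t * x) * W x)
      (volume.restrict (Ioi 0))} :=
    interior_mono (fun t ht ↦ integrableOn_exp_mul_mul_of_abs_le_rpow_mul_exp (by linarith) ht
        (hW_cont.aestronglyMeasurable measurableSet_Ioi)
        fun _ ↦ abs_rpow_mul_comp_inv_le hG_bound _)
      (mem_interior_iff_mem_nhds.2 (isOpen_Iio.mem_nhds hb))
  have hW_zero : EqOn W 0 (Ioi 0) := Measure.eqOn_open_of_ae_eq
    (ae_eq_zero_of_integral_pow_mul_eq_zero hW_exp hW_mom) isOpen_Ioi hW_cont continuousOn_const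
  intro t ht
  simpa [W, (Real.rpow_pos_of_pos (inv_pos.2 ht) _).ne'] using hW_zero (inv_pos.2 ht)

/-- If a continuous function `G` on `(0,∞)` satisfies the Gaussian-in-`1/t` bound
`|G(t)| ≤ C t^{-3/2} e^{-b/t}` and all the weighted integrals
`∫_0^∞ G(t) t^{-(m+s)} dt` vanish for integers `m ≥ 1`, then `G ≡ 0` on `(0,∞)`. -/
theorem vanish_of_weighted_moments_vanish
    (s b C : ℝ) (hs0 : 0 < s) (hs1 : s < 1) (hb : 0 < b) (hC : 0 < C)
    (G : ℝ → ℝ) (hG_cont : ContinuousOn G (Set.Ioi 0))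
    (hG_bound : ∀ t : ℝ, 0 < t → |G t| ≤ C * t ^ (-(3 / 2) : ℝ) * Real.exp (-b / t))
    (hmom : ∀ m : ℕ, 1 ≤ m → ∫ t in Set.Ioi (0 : ℝ), G t * t ^ (-((m : ℝ) + s)) = 0) :
    ∀ t : ℝ, 0 < t → G t = 0 :=
  vanish_of_weighted_moments_vanish_general s b C hs0 hb G hG_cont hG_bound hmom
end

section
/- Let l be a positive integer, 0 < s < 1, μ > 0, and T > 0. Let λ : Fin l → ℝ satisfy λ_k ≥ μ for every k. Let F : ℝ → EuclideanSpace ℝ (Fin l) be continuous and let c : ℝ → EuclideanSpace ℝ (Fin l) be twice continuously differentiable with c(0) = 0 and c'(0) = 0, such that for every k and every t ∈ [0,T], c_k''(t) + λ_k·c_k(t) + λ_k^s·c_k'(t) = F_k(t). Then for every t ∈ [0,T]: ∑_k (c_k'(t))² + ∑_k λ_k·(c_k(t))² + ∫_0^t ∑_k λ_k^s·(c_k'(τ))² dτ ≤ (4/μ^s)·∫_0^t ‖F(τ)‖² dτ. -/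
open MeasureTheory

/-!
Multiplying the `k`-th equation by `2 c_k'` shows that the energy
`E = ∑ (c_k')² + ∑ λ_k c_k²` satisfies
`E' + ∑ λ_k^s (c_k')² = ∑ (2 c_k' F_k - λ_k^s (c_k')²) ≤ ∑ F_k² / λ_k^s ≤ ‖F‖² / μ^s`
by Young's inequality and `λ_k^s ≥ μ^s`. Integrating from `0`, where `E` vanishes, gives the
estimate with constant `1 / μ^s`, which is at most `4 / μ^s`.
-/

open Set

theorem HasDerivAt.euclideanSpace_apply {ι : Type*} [Fintype ι] {f : ℝ → EuclideanSpace ℝ ι}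
    {f' : EuclideanSpace ℝ ι} {t : ℝ} (hf : HasDerivAt f f' t) (k : ι) :
    HasDerivAt (fun τ => f τ k) (f' k) t :=
  (EuclideanSpace.proj k : EuclideanSpace ℝ ι →L[ℝ] ℝ).hasFDerivAt.comp_hasDerivAt t hf

theorem two_mul_mul_sub_mul_sq_le_sq_div {a b L : ℝ} (hL : 0 < L) :
    2 * a * b - L * a ^ 2 ≤ b ^ 2 / L := by
  rw [le_div_iff₀ hL]
  nlinarith [sq_nonneg (L * a - b)]

theorem sub_add_integral_le_integral_of_hasDerivAt {E E' P Q : ℝ → ℝ} {a b : ℝ} (hab : a ≤ b)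
    (hE : ∀ u ∈ Icc a b, HasDerivAt E (E' u) u) (hP : IntervalIntegrable P volume a b)
    (hQ : IntervalIntegrable Q volume a b) (hEPQ : ∀ u ∈ Ioo a b, E' u + P u ≤ Q u) :
    E b - E a + ∫ u in a..b, P u ≤ ∫ u in a..b, Q u := by
  have h := intervalIntegral.sub_le_integral_of_hasDeriv_right_of_le hab
    (fun u hu => (hE u hu).continuousAt.continuousWithinAt)
    (fun u hu => (hE u (Ioo_subset_Icc_self hu)).hasDerivWithinAt)
    ((intervalIntegrable_iff_integrableOn_Icc_of_le hab).1 (hQ.sub hP))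
    (fun u hu => le_sub_iff_add_le.2 (hEPQ u hu))
  rw [intervalIntegral.integral_sub hQ hP] at h
  linarith

section DampedOscillators

variable {ι : Type*} [Fintype ι]

theorem sum_two_mul_sub_le_norm_sq_div {m : ℝ} (hm : 0 < m) {d : ι → ℝ} (hd : ∀ k, m ≤ d k)
    (v f : EuclideanSpace ℝ ι) :
    ∑ k, (2 * v k * f k - d k * v k ^ 2) ≤ ‖f‖ ^ 2 / m := by
  rw [EuclideanSpace.real_norm_sq_eq, Finset.sum_div]
  gcongr with k
  calc 2 * v k * f k - d k * v k ^ 2 ≤ f k ^ 2 / d k :=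
        two_mul_mul_sub_mul_sq_le_sq_div (hm.trans_le (hd k))
    _ ≤ f k ^ 2 / m := div_le_div_of_nonneg_left (sq_nonneg _) hm (hd k)

def oscillatorEnergy (lam : ι → ℝ) (x v : EuclideanSpace ℝ ι) : ℝ :=
  ∑ k, v k ^ 2 + ∑ k, lam k * x k ^ 2

theorem hasDerivAt_oscillatorEnergy (lam : ι → ℝ) {c c' c'' : ℝ → EuclideanSpace ℝ ι} {t : ℝ}
    (hc1 : HasDerivAt c (c' t) t) (hc2 : HasDerivAt c' (c'' t) t) :
    HasDerivAt (fun τ => oscillatorEnergy lam (c τ) (c' τ))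
      (∑ k, 2 * c' t k * (c'' t k + lam k * c t k)) t := by
  have hsum := (HasDerivAt.fun_sum (u := Finset.univ) fun k _ =>
      (hc2.euclideanSpace_apply k).fun_pow 2).add
    (HasDerivAt.fun_sum (u := Finset.univ) fun k _ =>
      ((hc1.euclideanSpace_apply k).fun_pow 2).const_mul (lam k))
  refine hsum.congr_deriv ?_
  rw [← Finset.sum_add_distrib]
  congr 1 with k
  push_cast
  ring

theorem oscillatorEnergy_zero (lam : ι → ℝ) : oscillatorEnergy lam 0 0 = 0 := by
  simp [oscillatorEnergy]

theorem oscillatorEnergy_sub_add_integral_le {lam d : ι → ℝ} {m a b : ℝ} (hm : 0 < m)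
    (hd : ∀ k, m ≤ d k) {F c c' c'' : ℝ → EuclideanSpace ℝ ι} (hF : Continuous F)
    (hc1 : ∀ t, HasDerivAt c (c' t) t) (hc2 : ∀ t, HasDerivAt c' (c'' t) t) (hab : a ≤ b)
    (hode : ∀ k, ∀ t ∈ Icc a b, c'' t k + lam k * c t k + d k * c' t k = F t k) :
    oscillatorEnergy lam (c b) (c' b) - oscillatorEnergy lam (c a) (c' a)
        + ∫ t in a..b, ∑ k, d k * c' t k ^ 2
      ≤ (∫ t in a..b, ‖F t‖ ^ 2) / m := by
  have hc' : Continuous c' := continuous_iff_continuousAt.2 fun t => (hc2 t).continuousAt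
  rw [← intervalIntegral.integral_div]
  refine sub_add_integral_le_integral_of_hasDerivAt hab
    (fun t _ => hasDerivAt_oscillatorEnergy lam (hc1 t) (hc2 t))
    ((by fun_prop : Continuous fun t => ∑ k, d k * c' t k ^ 2).intervalIntegrable a b)
    ((by fun_prop : Continuous fun t => ‖F t‖ ^ 2 / m).intervalIntegrable a b) fun t ht => ?_
  calc ∑ k, 2 * c' t k * (c'' t k + lam k * c t k) + ∑ k, d k * c' t k ^ 2
      = ∑ k, (2 * c' t k * F t k - d k * c' t k ^ 2) := by
        rw [← Finset.sum_add_distrib]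
        refine Finset.sum_congr rfl fun k _ => ?_
        linear_combination 2 * c' t k * hode k t (Ioo_subset_Icc_self ht)
    _ ≤ ‖F t‖ ^ 2 / m := sum_two_mul_sub_le_norm_sq_div hm hd _ _

end DampedOscillators

theorem galerkin_energy_estimate_general
    (l : ℕ) (s μ T : ℝ) (hs0 : 0 < s)
    (hμ : 0 < μ)
    (lam : Fin l → ℝ) (hlam : ∀ k, μ ≤ lam k)
    (F : ℝ → EuclideanSpace ℝ (Fin l)) (hF : Continuous F)
    (c c' c'' : ℝ → EuclideanSpace ℝ (Fin l))
    (hc1 : ∀ t : ℝ, HasDerivAt c (c' t) t)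
    (hc2 : ∀ t : ℝ, HasDerivAt c' (c'' t) t)
    (hc0 : c 0 = 0) (hc'0 : c' 0 = 0)
    (hode : ∀ k : Fin l, ∀ t ∈ Set.Icc (0 : ℝ) T,
      c'' t k + lam k * c t k + (lam k) ^ s * c' t k = F t k) :
    ∀ t ∈ Set.Icc (0 : ℝ) T,
      (∑ k : Fin l, (c' t k) ^ 2) + (∑ k : Fin l, lam k * (c t k) ^ 2)
        + ∫ τ in (0 : ℝ)..t, ∑ k : Fin l, (lam k) ^ s * (c' τ k) ^ 2
      ≤ (4 / μ ^ s) * ∫ τ in (0 : ℝ)..t, ‖F τ‖ ^ 2 := by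
  intro t ht
  have hdamp : ∀ k, μ ^ s ≤ lam k ^ s := fun k => Real.rpow_le_rpow hμ.le (hlam k) hs0.le
  have hμs : 0 < μ ^ s := Real.rpow_pos_of_pos hμ s
  have henergy := oscillatorEnergy_sub_add_integral_le hμs hdamp hF hc1 hc2 ht.1
    fun k u hu => hode k u ⟨hu.1, hu.2.trans ht.2⟩
  rw [hc0, hc'0, oscillatorEnergy_zero, sub_zero] at henergy
  have hF2 : 0 ≤ ∫ τ in (0 : ℝ)..t, ‖F τ‖ ^ 2 :=
    intervalIntegral.integral_nonneg ht.1 fun _ _ => sq_nonneg _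
  calc _ ≤ (∫ τ in (0 : ℝ)..t, ‖F τ‖ ^ 2) / μ ^ s := henergy
    _ ≤ (4 / μ ^ s) * ∫ τ in (0 : ℝ)..t, ‖F τ‖ ^ 2 := by
      rw [div_mul_eq_mul_div]
      gcongr
      linarith

/-- Galerkin energy estimate for the damped oscillator system
`c_k'' + λ_k c_k + λ_k^s c_k' = F_k` with zero initial data, where `λ_k ≥ μ > 0`:
`∑ (c_k')² + ∑ λ_k c_k² + ∫_0^t ∑ λ_k^s (c_k')² ≤ (4/μ^s) ∫_0^t ‖F‖²`. -/
theorem galerkin_energy_estimate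
    (l : ℕ) (hl : 0 < l) (s μ T : ℝ) (hs0 : 0 < s) (hs1 : s < 1)
    (hμ : 0 < μ) (hT : 0 < T)
    (lam : Fin l → ℝ) (hlam : ∀ k, μ ≤ lam k)
    (F : ℝ → EuclideanSpace ℝ (Fin l)) (hF : Continuous F)
    (c c' c'' : ℝ → EuclideanSpace ℝ (Fin l))
    (hc1 : ∀ t : ℝ, HasDerivAt c (c' t) t)
    (hc2 : ∀ t : ℝ, HasDerivAt c' (c'' t) t)
    (hc2cont : Continuous c'')
    (hc0 : c 0 = 0) (hc'0 : c' 0 = 0)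
    (hode : ∀ k : Fin l, ∀ t ∈ Set.Icc (0 : ℝ) T,
      c'' t k + lam k * c t k + (lam k) ^ s * c' t k = F t k) :
    ∀ t ∈ Set.Icc (0 : ℝ) T,
      (∑ k : Fin l, (c' t k) ^ 2) + (∑ k : Fin l, lam k * (c t k) ^ 2)
        + ∫ τ in (0 : ℝ)..t, ∑ k : Fin l, (lam k) ^ s * (c' τ k) ^ 2
      ≤ (4 / μ ^ s) * ∫ τ in (0 : ℝ)..t, ‖F τ‖ ^ 2 :=
  galerkin_energy_estimate_general l s μ T hs0 hμ lam hlam F hF c c' c'' hc1 hc2 hc0 hc'0 hode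
end
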